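/- arXiv:2011.11985 — 3 statements merged into one kernel-verified Lean document; each statement's English description precedes it below -/
import Mathlib

section
/- For all nonnegative reals a, b and all β with 0 < β ≤ 1, (a + b)^(3/2) ≤ sqrt(1 + β/2)·a^(3/2) + sqrt(1 + 2/β)·b^(3/2). -/
/-!
Convexity of `x ↦ x ^ p` applied to `a + b = c⁻¹ • (c * a) + d⁻¹ • (d * b)` gives the weighted
Young-type bound `(a + b) ^ p ≤ c ^ (p - 1) * a ^ p + d ^ (p - 1) * b ^ p` for any conjugate
weights `c⁻¹ + d⁻¹ = 1`. The weights `c = 1 + β / 2`, `d = 1 + 2 / β` are conjugate, and for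
`p = 3 / 2` the factors `c ^ (p - 1)`, `d ^ (p - 1)` are square roots.
-/

open Real

lemma rpow_add_le_mul_rpow_add_mul_rpow {p a b c d : ℝ} (hp : 1 ≤ p) (ha : 0 ≤ a) (hb : 0 ≤ b)
    (hc : 0 < c) (hd : 0 < d) (hcd : c⁻¹ + d⁻¹ = 1) :
    (a + b) ^ p ≤ c ^ (p - 1) * a ^ p + d ^ (p - 1) * b ^ p := by
  have hconv := (convexOn_rpow hp).2 (Set.mem_Ici.2 (mul_nonneg hc.le ha))
    (Set.mem_Ici.2 (mul_nonneg hd.le hb)) (inv_nonneg.2 hc.le) (inv_nonneg.2 hd.le) hcd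
  have hweight : ∀ {w x : ℝ}, 0 < w → 0 ≤ x → w⁻¹ * (w * x) ^ p = w ^ (p - 1) * x ^ p :=
    fun hw hx => by rw [mul_rpow hw.le hx, rpow_sub_one hw.ne']; ring
  simp only [smul_eq_mul, inv_mul_cancel_left₀ hc.ne', inv_mul_cancel_left₀ hd.ne'] at hconv
  rwa [hweight hc ha, hweight hd hb] at hconv

lemma inv_one_add_half_add_inv_one_add_two_div {β : ℝ} (hβ : 0 < β) :
    (1 + β / 2)⁻¹ + (1 + 2 / β)⁻¹ = 1 := by
  field_simp
  ring

theorem stmt_3_general (a b β : ℝ) (ha : 0 ≤ a) (hb : 0 ≤ b) (hβ : 0 < β) :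
    (a + b) ^ ((3 : ℝ) / 2) ≤
      Real.sqrt (1 + β / 2) * a ^ ((3 : ℝ) / 2) + Real.sqrt (1 + 2 / β) * b ^ ((3 : ℝ) / 2) := by
  have hsqrt : ∀ x : ℝ, Real.sqrt x = x ^ ((3 : ℝ) / 2 - 1) := fun x => by
    rw [sqrt_eq_rpow]; norm_num
  rw [hsqrt, hsqrt]
  exact rpow_add_le_mul_rpow_add_mul_rpow (by norm_num) ha hb (by positivity) (by positivity)
    (inv_one_add_half_add_inv_one_add_two_div hβ)

theorem stmt_3 (a b β : ℝ) (ha : 0 ≤ a) (hb : 0 ≤ b) (hβ : 0 < β) (hβ1 : β ≤ 1) :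
    (a + b) ^ ((3 : ℝ) / 2) ≤
      Real.sqrt (1 + β / 2) * a ^ ((3 : ℝ) / 2) + Real.sqrt (1 + 2 / β) * b ^ ((3 : ℝ) / 2) :=
  stmt_3_general a b β ha hb hβ
end

section
/- For all g, Δ ∈ ℝ^d, −⟨g + Δ, g⟩/‖g + Δ‖^(1/2) ≤ −‖g‖^(3/2)/3 + 8‖Δ‖^(3/2), where the left side is interpreted as 0 if g + Δ = 0 (in which case the right side is nonnegative since ‖g‖ = ‖Δ‖). -/
/-!
Substituting `x = ‖g‖^{1/2}`, `y = ‖Δ‖^{1/2}`, `s = ‖g + Δ‖^{1/2}` and `T = -⟪g + Δ, g⟫` turns the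
claim into `T / s ≤ -x³/3 + 8y³`, and only four facts about the vectors are needed:
Cauchy–Schwarz `T ≤ s²x²`, the expansion `T = -‖g‖² - ⟪Δ, g⟫ ≤ x²y² - x⁴`, and the two triangle
inequalities. If `‖g‖ ≥ 2‖Δ‖` the gradient dominates: `T ≤ -x⁴/2` and `s ≤ 3x/2`, so
`T ≤ -s x³/3`. Otherwise everything is of order `‖Δ‖`: `s ≤ 2y`, `x ≤ 3y/2`, and Cauchy–Schwarz
gives `T ≤ s · s x² ≤ s (8y³ - x³/3)`.
-/

namespace NormalizedDescent

lemma rpow_three_halves_eq_sqrt_pow {a : ℝ} (ha : 0 ≤ a) : a ^ ((3 : ℝ) / 2) = √a ^ 3 := by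
  rw [Real.sqrt_eq_rpow, ← Real.rpow_natCast, ← Real.rpow_mul ha]
  norm_num

variable {x y s T : ℝ}

lemma le_mul_of_two_sq_le (hx : 0 ≤ x) (hy : 0 ≤ y) (hs : 0 ≤ s) (hxy : 2 * y ^ 2 ≤ x ^ 2)
    (hs_le : s ^ 2 ≤ x ^ 2 + y ^ 2) (hT : T ≤ x ^ 2 * y ^ 2 - (x ^ 2) ^ 2) :
    T ≤ s * (-x ^ 3 / 3 + 8 * y ^ 3) := by
  have hsx : s ≤ 3 / 2 * x :=
    le_of_pow_le_pow_left₀ two_ne_zero (by positivity) (by nlinarith)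
  have hTx : T ≤ -x ^ 4 / 2 := by nlinarith
  nlinarith [mul_nonneg (pow_nonneg hx 3) (sub_nonneg.2 hsx), mul_nonneg hs (pow_nonneg hy 3)]

lemma le_mul_of_sq_le_two (hy : 0 ≤ y) (hs : 0 ≤ s) (hxy : x ^ 2 ≤ 2 * y ^ 2)
    (hs_le : s ^ 2 ≤ x ^ 2 + y ^ 2) (hT : T ≤ s ^ 2 * x ^ 2) :
    T ≤ s * (-x ^ 3 / 3 + 8 * y ^ 3) := by
  have hsy : s ≤ 2 * y := le_of_pow_le_pow_left₀ two_ne_zero (by positivity) (by nlinarith)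
  have hxy' : x ≤ 3 / 2 * y := le_of_pow_le_pow_left₀ two_ne_zero (by positivity) (by nlinarith)
  have hsx2 : s * x ^ 2 ≤ 4 * y ^ 3 := by
    nlinarith [mul_le_mul hsy hxy (sq_nonneg x) (by positivity)]
  have hx3 : x ^ 3 ≤ 3 * y ^ 3 := by
    nlinarith [mul_le_mul hxy' hxy (sq_nonneg x) (by positivity)]
  have h_sum : s * x ^ 2 + x ^ 3 / 3 ≤ 8 * y ^ 3 := by linarith [pow_nonneg hy 3]
  nlinarith [mul_le_mul_of_nonneg_left h_sum hs]

lemma div_le_of_sq_bounds (hx : 0 ≤ x) (hy : 0 ≤ y) (hs : 0 ≤ s)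
    (hT_cs : T ≤ s ^ 2 * x ^ 2) (hT : T ≤ x ^ 2 * y ^ 2 - (x ^ 2) ^ 2)
    (hs_le : s ^ 2 ≤ x ^ 2 + y ^ 2) (hx_le : x ^ 2 ≤ s ^ 2 + y ^ 2) :
    T / s ≤ -x ^ 3 / 3 + 8 * y ^ 3 := by
  rcases hs.eq_or_lt with rfl | hs_pos
  · have hxy : x ≤ y := le_of_pow_le_pow_left₀ two_ne_zero hy (by linarith)
    rw [div_zero]
    nlinarith [pow_le_pow_left₀ hx hxy 3]
  rw [div_le_iff₀ hs_pos, mul_comm]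
  rcases le_total (2 * y ^ 2) (x ^ 2) with hxy | hxy
  · exact le_mul_of_two_sq_le hx hy hs hxy hs_le hT
  · exact le_mul_of_sq_le_two hy hs hxy hs_le hT_cs

end NormalizedDescent

open NormalizedDescent in
theorem neg_inner_div_norm_rpow_le {E : Type*} [NormedAddCommGroup E] [InnerProductSpace ℝ E]
    (g Δ : E) :
    -(inner ℝ (g + Δ) g : ℝ) / ‖g + Δ‖ ^ ((1 : ℝ) / 2) ≤
      -‖g‖ ^ ((3 : ℝ) / 2) / 3 + 8 * ‖Δ‖ ^ ((3 : ℝ) / 2) := by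
  have h_cs : -(inner ℝ (g + Δ) g : ℝ) ≤ ‖g + Δ‖ * ‖g‖ :=
    (neg_le_abs _).trans (abs_real_inner_le_norm _ _)
  have h_expand : -(inner ℝ (g + Δ) g : ℝ) ≤ ‖g‖ * ‖Δ‖ - ‖g‖ ^ 2 := by
    rw [inner_add_left, real_inner_self_eq_norm_sq]
    linarith [(neg_le_abs _).trans (abs_real_inner_le_norm Δ g)]
  have h_le : ‖g + Δ‖ ≤ ‖g‖ + ‖Δ‖ := norm_add_le _ _
  have h_ge : ‖g‖ ≤ ‖g + Δ‖ + ‖Δ‖ := by simpa using norm_sub_le (g + Δ) Δ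
  rw [← Real.sqrt_eq_rpow, rpow_three_halves_eq_sqrt_pow (norm_nonneg g),
    rpow_three_halves_eq_sqrt_pow (norm_nonneg Δ)]
  apply div_le_of_sq_bounds (Real.sqrt_nonneg _) (Real.sqrt_nonneg _) (Real.sqrt_nonneg _) <;>
    simp only [Real.sq_sqrt (norm_nonneg _)] <;> linarith

theorem stmt_13 (d : ℕ) (g Δ : EuclideanSpace ℝ (Fin d)) :
    -(inner ℝ (g + Δ) g : ℝ) / ‖g + Δ‖ ^ ((1 : ℝ) / 2) ≤
      -‖g‖ ^ ((3 : ℝ) / 2) / 3 + 8 * ‖Δ‖ ^ ((3 : ℝ) / 2) :=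
  neg_inner_div_norm_rpow_le g Δ
end

section
/- Let F : ℝ^d → ℝ be differentiable with L-Lipschitz gradient, let w, z ∈ ℝ^d, η > 0 with ηL ≤ 1/4, and set w' = w − η·z. Then ‖∇F(w)‖^2 ≤ 4(F(w) − F(w'))/η + 3‖z − ∇F(w)‖^2. -/
/-!
The derivative `⟪∇F (w + t v), v⟫` of `t ↦ F (w + t v)` is at most `⟪∇F w, v⟫ + L t ‖v‖²`, so
comparing with the corresponding parabola on `[0, 1]` gives the descent lemma
`F (w + v) ≤ F w + ⟪∇F w, v⟫ + L ‖v‖² / 2`. At `v = -η z`, with `g = ∇F w` and `ηL ≤ 1/4`, this yields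
`4 (F w - F w') / η ≥ 4 ⟪g, z⟫ - ‖z‖²`. Finally `‖g‖² ≤ 4 ⟪g, z⟫ - ‖z‖² + 3 ‖z - g‖²`, since the
difference of the two sides is `‖g‖² + ‖z‖² + ‖z - g‖²`.
-/

open Set
open scoped RealInnerProductSpace

variable {E : Type*} [NormedAddCommGroup E] [InnerProductSpace ℝ E]

theorem norm_sq_le_four_inner_sub_norm_sq_add_three_norm_sub_sq (g z : E) :
    ‖g‖ ^ 2 ≤ 4 * ⟪g, z⟫ - ‖z‖ ^ 2 + 3 * ‖z - g‖ ^ 2 := by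
  nlinarith [norm_sub_sq_real z g, real_inner_comm g z, sq_nonneg ‖z‖, sq_nonneg ‖z - g‖]

variable [CompleteSpace E]

theorem Differentiable.hasDerivAt_apply_add_smul {f : E → ℝ} (hf : Differentiable ℝ f) (x v : E)
    (t : ℝ) : HasDerivAt (fun s : ℝ => f (x + s • v)) ⟪gradient f (x + t • v), v⟫ t := by
  have hline : HasDerivAt (fun s : ℝ => x + s • v) v t := by
    simpa using ((hasDerivAt_id t).smul_const v).const_add x
  exact (hasGradientAt_iff_hasFDerivAt.mp (hf (x + t • v)).hasGradientAt).comp_hasDerivAt t hline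

theorem Differentiable.apply_add_le_of_lipschitz_gradient {f : E → ℝ} (hf : Differentiable ℝ f)
    {L : ℝ} (hL : ∀ x y, ‖gradient f x - gradient f y‖ ≤ L * ‖x - y‖) (x v : E) :
    f (x + v) ≤ f x + ⟪gradient f x, v⟫ + L / 2 * ‖v‖ ^ 2 := by
  have hB : ∀ t : ℝ, HasDerivAt (fun s : ℝ => f x + s * ⟪gradient f x, v⟫ + L / 2 * s ^ 2 * ‖v‖ ^ 2)
      (⟪gradient f x, v⟫ + L * t * ‖v‖ ^ 2) t := by
    intro t
    refine ((((hasDerivAt_id t).mul_const ⟪gradient f x, v⟫).const_add (f x)).add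
      (((hasDerivAt_pow 2 t).const_mul (L / 2)).mul_const (‖v‖ ^ 2))).congr_deriv ?_
    simp only [Nat.cast_ofNat]; ring
  have hderiv_le : ∀ t ∈ Ico (0 : ℝ) 1,
      ⟪gradient f (x + t • v), v⟫ ≤ ⟪gradient f x, v⟫ + L * t * ‖v‖ ^ 2 := by
    rintro t ⟨ht, -⟩
    calc ⟪gradient f (x + t • v), v⟫
        = ⟪gradient f x, v⟫ + ⟪gradient f (x + t • v) - gradient f x, v⟫ := by
          rw [inner_sub_left]; ring
      _ ≤ ⟪gradient f x, v⟫ + ‖gradient f (x + t • v) - gradient f x‖ * ‖v‖ := by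
          gcongr; exact real_inner_le_norm _ _
      _ ≤ ⟪gradient f x, v⟫ + L * ‖(x + t • v) - x‖ * ‖v‖ := by
          gcongr; exact hL _ _
      _ = ⟪gradient f x, v⟫ + L * t * ‖v‖ ^ 2 := by
          rw [add_sub_cancel_left, norm_smul, Real.norm_of_nonneg ht]; ring
  have := image_le_of_deriv_right_le_deriv_boundary
    (fun t _ => (hf.hasDerivAt_apply_add_smul x v t).continuousAt.continuousWithinAt)
    (fun t _ => (hf.hasDerivAt_apply_add_smul x v t).hasDerivWithinAt) (by simp)
    (fun t _ => (hB t).continuousAt.continuousWithinAt) (fun t _ => (hB t).hasDerivWithinAt)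
    hderiv_le (right_mem_Icc.mpr zero_le_one)
  simpa using this

theorem stmt_14 (d : ℕ) (F : EuclideanSpace ℝ (Fin d) → ℝ) (L : ℝ)
    (hF : Differentiable ℝ F)
    (hL : ∀ x y, ‖gradient F x - gradient F y‖ ≤ L * ‖x - y‖)
    (w z : EuclideanSpace ℝ (Fin d)) (η : ℝ) (hη : 0 < η) (hηL : η * L ≤ 1 / 4)
    (w' : EuclideanSpace ℝ (Fin d)) (hw' : w' = w - η • z) :
    ‖gradient F w‖ ^ 2 ≤ 4 * (F w - F w') / η + 3 * ‖z - gradient F w‖ ^ 2 := by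
  set g := gradient F w
  have hdescent : F w' ≤ F w - η * ⟪g, z⟫ + L / 2 * η ^ 2 * ‖z‖ ^ 2 := by
    have := hF.apply_add_le_of_lipschitz_gradient hL w (-(η • z))
    rwa [← sub_eq_add_neg, ← hw', inner_neg_right, real_inner_smul_right, norm_neg, norm_smul,
      Real.norm_of_nonneg hη.le, mul_pow, ← sub_eq_add_neg, ← mul_assoc] at this
  have hstep : 4 * ⟪g, z⟫ - ‖z‖ ^ 2 ≤ 4 * (F w - F w') / η := by
    rw [le_div_iff₀ hη]
    nlinarith [mul_le_mul_of_nonneg_right hηL (mul_nonneg hη.le (sq_nonneg ‖z‖))]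
  linarith [norm_sq_le_four_inner_sub_norm_sq_add_three_norm_sub_sq g z]
end
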